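/- For every normal lax extension L of a Set-functor F and all functions f : X → A and g : Y → A, one has L(g° ⋅ f) = (F g)° ⋅ F f. In particular, all normal lax extensions of F coincide on difunctional relations. -/

import Mathlib

open CategoryTheory

universe u

/-- A relation from `X` to `Y`. -/
abbrev Rel' (X Y : Type u) : Type u := X → Y → Prop

/-- Composite `s ⋅ r` of `r : X ⇸ Y` and `s : Y ⇸ Z`. -/
def relComp {X Y Z : Type u} (s : Rel' Y Z) (r : Rel' X Y) : Rel' X Z :=
  fun x z => ∃ y, r x y ∧ s y z

/-- Converse relation `r°`. -/
def relConv {X Y : Type u} (r : Rel' X Y) : Rel' Y X := fun y x => r x y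

/-- Identity relation `1_X`. -/
def relId (X : Type u) : Rel' X X := fun x y => x = y

/-- The graph relation of a function. -/
def graphRel {X Y : Type u} (f : X → Y) : Rel' X Y := fun x y => f x = y

/-- Pointwise order `r ≤ r'` on relations. -/
def relLe {X Y : Type u} (r r' : Rel' X Y) : Prop := ∀ x y, r x y → r' x y

/-- A relation is total if every `x` is related to some `y`. -/
def relTotal {X Y : Type u} (r : Rel' X Y) : Prop := ∀ x, ∃ y, r x y

/-- A relation is surjective if every `y` is related to some `x`. -/
def relSurj {X Y : Type u} (r : Rel' X Y) : Prop := ∀ y, ∃ x, r x y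

/-- A lax extension of a `Set`-functor `F`. -/
structure LaxExt (F : Type u ⥤ Type u) : Type (u + 1) where
  ext : ∀ {X Y : Type u}, Rel' X Y → Rel' (F.obj X) (F.obj Y)
  mono : ∀ {X Y : Type u} (r r' : Rel' X Y), relLe r r' → relLe (ext r) (ext r')
  lcomp : ∀ {X Y Z : Type u} (r : Rel' X Y) (s : Rel' Y Z),
    relLe (relComp (ext s) (ext r)) (ext (relComp s r))
  mapLe : ∀ {X Y : Type u} (f : X → Y), relLe (graphRel (⇑(F.map (TypeCat.ofHom f)))) (ext (graphRel f))
  mapConvLe : ∀ {X Y : Type u} (f : X → Y),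
    relLe (relConv (graphRel (⇑(F.map (TypeCat.ofHom f))))) (ext (relConv (graphRel f)))

/-- A relax extension of a `Set`-functor `F` (a lax extension without (L2)). -/
structure RelaxExt (F : Type u ⥤ Type u) : Type (u + 1) where
  ext : ∀ {X Y : Type u}, Rel' X Y → Rel' (F.obj X) (F.obj Y)
  mono : ∀ {X Y : Type u} (r r' : Rel' X Y), relLe r r' → relLe (ext r) (ext r')
  mapLe : ∀ {X Y : Type u} (f : X → Y), relLe (graphRel (⇑(F.map (TypeCat.ofHom f)))) (ext (graphRel f))
  mapConvLe : ∀ {X Y : Type u} (f : X → Y),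
    relLe (relConv (graphRel (⇑(F.map (TypeCat.ofHom f))))) (ext (relConv (graphRel f)))

/-- Normality (identity-preservation) of a lax extension. -/
def LaxExt.IsNormal {F : Type u ⥤ Type u} (L : LaxExt F) : Prop :=
  ∀ X : Type u, L.ext (relId X) = relId (F.obj X)

/-- The Barr lifting of a relation along a functor, computed from the canonical span. -/
def BarrLift (F : Type u ⥤ Type u) {X Y : Type u} (r : Rel' X Y) :
    Rel' (F.obj X) (F.obj Y) :=
  fun a b => ∃ t : F.obj {p : X × Y // r p.1 p.2},
    F.map (TypeCat.ofHom (fun p : {p : X × Y // r p.1 p.2} => p.1.1)) t = a ∧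
    F.map (TypeCat.ofHom (fun p : {p : X × Y // r p.1 p.2} => p.1.2)) t = b

/-- A commutative square of functions that is a pullback. -/
def IsPBSquare {P X Y Z : Type u} (p₁ : P → X) (p₂ : P → Y) (f : X → Z) (g : Y → Z) : Prop :=
  (∀ p, f (p₁ p) = g (p₂ p)) ∧ ∀ x y, f x = g y → ∃! p, p₁ p = x ∧ p₂ p = y

/-- A commutative square of functions that is a weak pullback. -/
def IsWeakPBSquare {P X Y Z : Type u} (p₁ : P → X) (p₂ : P → Y) (f : X → Z) (g : Y → Z) : Prop :=
  (∀ p, f (p₁ p) = g (p₂ p)) ∧ ∀ x y, f x = g y → ∃ p, p₁ p = x ∧ p₂ p = y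

/-- `F` preserves 1/4-iso pullbacks. -/
def Preserves14IsoPullbacks (F : Type u ⥤ Type u) : Prop :=
  ∀ (P X Y Z : Type u) (p₁ : P → X) (p₂ : P → Y) (f : X → Z) (g : Y → Z),
    Function.Bijective p₂ → IsPBSquare p₁ p₂ f g →
      IsPBSquare (⇑(F.map (TypeCat.ofHom p₁))) (⇑(F.map (TypeCat.ofHom p₂))) (⇑(F.map (TypeCat.ofHom f))) (⇑(F.map (TypeCat.ofHom g)))

/-- `F` preserves 1/4-iso 2/4-mono pullbacks. -/
def Preserves14Iso24MonoPullbacks (F : Type u ⥤ Type u) : Prop :=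
  ∀ (P X Y Z : Type u) (p₁ : P → X) (p₂ : P → Y) (f : X → Z) (g : Y → Z),
    Function.Bijective p₂ → Function.Injective p₁ → Function.Injective g →
      IsPBSquare p₁ p₂ f g →
      IsPBSquare (⇑(F.map (TypeCat.ofHom p₁))) (⇑(F.map (TypeCat.ofHom p₂))) (⇑(F.map (TypeCat.ofHom f))) (⇑(F.map (TypeCat.ofHom g)))

/-- `F` preserves 1/4-mono pullbacks. -/
def Preserves14MonoPullbacks (F : Type u ⥤ Type u) : Prop :=
  ∀ (P X Y Z : Type u) (p₁ : P → X) (p₂ : P → Y) (f : X → Z) (g : Y → Z),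
    Function.Injective p₁ → IsPBSquare p₁ p₂ f g →
      IsPBSquare (⇑(F.map (TypeCat.ofHom p₁))) (⇑(F.map (TypeCat.ofHom p₂))) (⇑(F.map (TypeCat.ofHom f))) (⇑(F.map (TypeCat.ofHom g)))

/-- `F` preserves inverse images. -/
def PreservesInverseImages (F : Type u ⥤ Type u) : Prop :=
  ∀ (P X Y Z : Type u) (p₁ : P → X) (p₂ : P → Y) (f : X → Z) (g : Y → Z),
    Function.Injective p₁ → Function.Injective g → IsPBSquare p₁ p₂ f g →
      IsPBSquare (⇑(F.map (TypeCat.ofHom p₁))) (⇑(F.map (TypeCat.ofHom p₂))) (⇑(F.map (TypeCat.ofHom f))) (⇑(F.map (TypeCat.ofHom g)))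

/-- `F` weakly preserves 4/4-epi pullbacks. -/
def WeaklyPreserves44EpiPullbacks (F : Type u ⥤ Type u) : Prop :=
  ∀ (P X Y Z : Type u) (p₁ : P → X) (p₂ : P → Y) (f : X → Z) (g : Y → Z),
    Function.Surjective p₁ → Function.Surjective p₂ →
    Function.Surjective f → Function.Surjective g →
    IsPBSquare p₁ p₂ f g →
      IsWeakPBSquare (⇑(F.map (TypeCat.ofHom p₁))) (⇑(F.map (TypeCat.ofHom p₂))) (⇑(F.map (TypeCat.ofHom f))) (⇑(F.map (TypeCat.ofHom g)))

/-- A (nonempty) composable sequence of relations from `X` to `Z`. -/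
inductive RelChain : Type u → Type u → Type (u + 1)
  | single : ∀ {X Y : Type u}, Rel' X Y → RelChain X Y
  | cons : ∀ {X Y Z : Type u}, Rel' X Y → RelChain Y Z → RelChain X Z

/-- Composite of a composable sequence of relations (first relation applied first). -/
def RelChain.comp : ∀ {X Z : Type u}, RelChain X Z → Rel' X Z
  | _, _, .single r => r
  | _, _, .cons r c => relComp (RelChain.comp c) r

/-- Composite of the Barr liftings of a composable sequence of relations. -/
def RelChain.barr (F : Type u ⥤ Type u) : ∀ {X Z : Type u}, RelChain X Z → Rel' (F.obj X) (F.obj Z)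
  | _, _, .single r => BarrLift F r
  | _, _, .cons r c => relComp (RelChain.barr F c) (BarrLift F r)

/-- Length (number of relations) of a composable sequence. -/
def RelChain.length : ∀ {X Z : Type u}, RelChain X Z → ℕ
  | _, _, .single _ => 1
  | _, _, .cons _ c => RelChain.length c + 1

/-- All relations in a composable sequence are total and surjective. -/
def RelChain.allTS : ∀ {X Z : Type u}, RelChain X Z → Prop
  | _, _, .single r => relTotal r ∧ relSurj r
  | _, _, .cons r c => (relTotal r ∧ relSurj r) ∧ RelChain.allTS c

/-- All relations in a composable sequence except the last one are total and surjective. -/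
def RelChain.initTS : ∀ {X Z : Type u}, RelChain X Z → Prop
  | _, _, .single _ => True
  | _, _, .cons r c => (relTotal r ∧ relSurj r) ∧ RelChain.initTS c

/-- Composite of the images of a composable sequence of relations under an assignment `R`. -/
def RelChain.lift (F : Type u ⥤ Type u)
    (R : ∀ {X Y : Type u}, Rel' X Y → Rel' (F.obj X) (F.obj Y)) :
    ∀ {X Z : Type u}, RelChain X Z → Rel' (F.obj X) (F.obj Z)
  | _, _, .single r => R r
  | _, _, .cons r c => relComp (RelChain.lift F (fun {_ _} s => R s) c) (R r)

/-- `r ⋅ (r° ⋅ r)ⁿ`. -/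
def dfPow {X Y : Type u} (r : Rel' X Y) : ℕ → Rel' X Y
  | 0 => r
  | n + 1 => relComp (dfPow r n) (relComp (relConv r) r)

/-- The difunctional closure `r̂ = ⋁ₙ r ⋅ (r° ⋅ r)ⁿ` of a relation. -/
def difunClosure {X Y : Type u} (r : Rel' X Y) : Rel' X Y :=
  fun x y => ∃ n : ℕ, dfPow r n x y

theorem relLe_antisymm {X Y : Type u} {r r' : Rel' X Y} (h : relLe r r') (h' : relLe r' r) :
    r = r' :=
  funext fun x => funext fun y => propext ⟨h x y, h' x y⟩

theorem graphRel_comp_relConv_le_relId {X Y : Type u} (f : X → Y) :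
    relLe (relComp (graphRel f) (relConv (graphRel f))) (relId Y) := by
  rintro y y' ⟨x, rfl, rfl⟩
  rfl

theorem graphRel_comp_difunctional_le {X Y A : Type u} (f : X → A) (g : Y → A) :
    relLe (relComp (graphRel g) (relComp (relConv (graphRel g)) (graphRel f))) (graphRel f) := by
  rintro x a ⟨y, ⟨b, rfl, hb⟩, rfl⟩
  exact hb.symm

namespace LaxExt

variable {F : Type u ⥤ Type u} (L : LaxExt F)

theorem ext_comp {X Y Z : Type u} {r : Rel' X Y} {s : Rel' Y Z} {a : F.obj X} {b : F.obj Y}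
    {c : F.obj Z} (hr : L.ext r a b) (hs : L.ext s b c) : L.ext (relComp s r) a c :=
  L.lcomp r s a c ⟨b, hr, hs⟩

theorem map_difunctional_le {X Y A : Type u} (f : X → A) (g : Y → A) :
    relLe (relComp (relConv (graphRel (⇑(F.map (TypeCat.ofHom g)))))
        (graphRel (⇑(F.map (TypeCat.ofHom f)))))
      (L.ext (relComp (relConv (graphRel g)) (graphRel f))) := by
  rintro a b ⟨c, hf, hg⟩
  exact L.ext_comp (L.mapLe f a c hf) (L.mapConvLe g c b hg)

variable {L}

theorem ext_graphRel (hL : L.IsNormal) {X Y : Type u} (f : X → Y) :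
    L.ext (graphRel f) = graphRel (⇑(F.map (TypeCat.ofHom f))) := by
  refine relLe_antisymm (fun a b hab => ?_) (L.mapLe f)
  -- `(F f)° ≤ L f°` lets us precompose with `F f a ↦ a`, landing in `L (f ⋅ f°) ≤ L 1_Y = 1`.
  have hconv : L.ext (relConv (graphRel f)) (F.map (TypeCat.ofHom f) a) a :=
    L.mapConvLe f _ _ rfl
  have hid := L.mono _ _ (graphRel_comp_relConv_le_relId f) _ _ (L.ext_comp hconv hab)
  rwa [hL] at hid

theorem ext_difunctional (hL : L.IsNormal) {X Y A : Type u} (f : X → A) (g : Y → A) :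
    L.ext (relComp (relConv (graphRel g)) (graphRel f)) =
      relComp (relConv (graphRel (⇑(F.map (TypeCat.ofHom g)))))
        (graphRel (⇑(F.map (TypeCat.ofHom f)))) := by
  refine relLe_antisymm (fun a b hab => ?_) (L.map_difunctional_le f g)
  -- Postcomposing with `L g = F g` gives `L (g ⋅ g° ⋅ f) ≤ L f = F f`.
  have hg : L.ext (graphRel g) b (F.map (TypeCat.ofHom g) b) := L.mapLe g _ _ rfl
  have hf := L.mono _ _ (graphRel_comp_difunctional_le f g) _ _ (L.ext_comp hab hg)
  rw [ext_graphRel hL] at hf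
  exact ⟨_, hf, rfl⟩

end LaxExt

/-- Every normal lax extension acts as `(F g)° ⋅ F f` on the difunctional relation `g° ⋅ f`;
in particular, all normal lax extensions coincide on difunctional relations. -/
theorem stmt7 (F : Type u ⥤ Type u) (L : LaxExt F) (hL : L.IsNormal) :
    (∀ (X Y A : Type u) (f : X → A) (g : Y → A),
      L.ext (relComp (relConv (graphRel g)) (graphRel f)) =
        relComp (relConv (graphRel (⇑(F.map (TypeCat.ofHom g))))) (graphRel (⇑(F.map (TypeCat.ofHom f))))) ∧
    (∀ L' : LaxExt F, L'.IsNormal →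
      ∀ (X Y A : Type u) (f : X → A) (g : Y → A),
        L.ext (relComp (relConv (graphRel g)) (graphRel f)) =
          L'.ext (relComp (relConv (graphRel g)) (graphRel f))) :=
  ⟨fun _ _ _ f g => LaxExt.ext_difunctional hL f g,
    fun _ hL' _ _ _ f g => (LaxExt.ext_difunctional hL f g).trans
      (LaxExt.ext_difunctional hL' f g).symm⟩
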